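/- For u ∈ (−1,1) and ξ ∈ ℝ, the symplectic pairing of the two tangent vectors of the classical solitary manifold satisfies ∫_ℝ ( −∂_ξψ_0(ξ,u,x)·∂_uθ_0(ξ,u,x) + ∂_ξθ_0(ξ,u,x)·∂_uψ_0(ξ,u,x) ) dx = γ(u)³ · m, where m = ∫_ℝ (θ_K'(Z))² dZ. -/

import Mathlib

open MeasureTheory

noncomputable def thetaK (x : ℝ) : ℝ := 4 * Real.arctan (Real.exp x)

noncomputable def lorentz (u : ℝ) : ℝ := 1 / Real.sqrt (1 - u ^ 2)

noncomputable def theta0 (ξ u x : ℝ) : ℝ := thetaK (lorentz u * (x - ξ))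

noncomputable def psi0 (ξ u x : ℝ) : ℝ := -u * lorentz u * deriv thetaK (lorentz u * (x - ξ))
/-!
For a boosted profile `θ = f (γ(u) (x - ξ))`, `ψ = -u γ(u) f' (γ(u) (x - ξ))`, the chain rule gives
four derivatives in which the terms carrying `f''` cancel pairwise, leaving the density
`γ (γ + u γ') f'(Z)²`. Since `γ' = u γ³` and `γ² (1 - u²) = 1`, the prefactor is `γ⁴`, and the
substitution `Z = γ (x - ξ)` turns `∫ γ⁴ f'(Z)² dx` into `γ³ ∫ f'(Z)² dZ`.
-/

theorem contDiff_thetaK : ContDiff ℝ 2 thetaK :=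
  contDiff_const.mul Real.contDiff_exp.arctan

theorem integral_comp_mul_sub_real {E : Type*} [NormedAddCommGroup E] [NormedSpace ℝ E]
    (h : ℝ → E) (a b : ℝ) : ∫ x, h (a * (x - b)) = |a⁻¹| • ∫ y, h y := by
  rw [integral_sub_right_eq_self (fun x => h (a * x)) b, Measure.integral_comp_mul_left]

theorem travelingWave_symplectic_density {f g : ℝ → ℝ} (hf : ContDiff ℝ 2 f) {u : ℝ}
    (hg : DifferentiableAt ℝ g u) (ξ x : ℝ) :
    -(deriv (fun ξ' => -u * g u * deriv f (g u * (x - ξ'))) ξ)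
        * deriv (fun u' => f (g u' * (x - ξ))) u
      + deriv (fun ξ' => f (g u * (x - ξ'))) ξ
        * deriv (fun u' => -u' * g u' * deriv f (g u' * (x - ξ))) u
      = g u * (g u + u * deriv g u) * deriv f (g u * (x - ξ)) ^ 2 := by
  have hf₁ : Differentiable ℝ f := hf.differentiable two_ne_zero
  have hf₂ : Differentiable ℝ (deriv f) := hf.differentiable_deriv_two
  set Z := g u * (x - ξ)
  have hZξ : HasDerivAt (fun ξ' => g u * (x - ξ')) (-g u) ξ := by
    simpa using ((hasDerivAt_id ξ).const_sub x).const_mul (g u)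
  have hZu : HasDerivAt (fun u' => g u' * (x - ξ)) (deriv g u * (x - ξ)) u :=
    hg.hasDerivAt.mul_const _
  have hθξ := (hf₁ Z).hasDerivAt.comp ξ hZξ
  have hθu := (hf₁ Z).hasDerivAt.comp u hZu
  have hψξ := ((hf₂ Z).hasDerivAt.comp ξ hZξ).const_mul (-u * g u)
  have hψu := ((hasDerivAt_neg u).fun_mul hg.hasDerivAt).fun_mul ((hf₂ Z).hasDerivAt.comp u hZu)
  simp only [Function.comp_def] at hθξ hθu hψξ hψu
  rw [hθξ.deriv, hθu.deriv, hψξ.deriv, hψu.deriv]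
  ring

theorem one_sub_sq_pos_of_mem_Ioo {u : ℝ} (hu : u ∈ Set.Ioo (-1 : ℝ) 1) : 0 < 1 - u ^ 2 := by
  nlinarith [hu.1, hu.2]

theorem lorentz_pos {u : ℝ} (hu : u ∈ Set.Ioo (-1 : ℝ) 1) : 0 < lorentz u :=
  one_div_pos.mpr (Real.sqrt_pos.mpr (one_sub_sq_pos_of_mem_Ioo hu))

theorem lorentz_sq_mul_one_sub_sq {u : ℝ} (hu : u ∈ Set.Ioo (-1 : ℝ) 1) :
    lorentz u ^ 2 * (1 - u ^ 2) = 1 := by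
  have h := one_sub_sq_pos_of_mem_Ioo hu
  rw [lorentz, div_pow, Real.sq_sqrt h.le]
  field_simp

theorem hasDerivAt_lorentz {u : ℝ} (hu : u ∈ Set.Ioo (-1 : ℝ) 1) :
    HasDerivAt lorentz (u * lorentz u ^ 3) u := by
  have h := one_sub_sq_pos_of_mem_Ioo hu
  have hsqrt := ((hasDerivAt_pow 2 u).const_sub 1).sqrt h.ne'
  rw [show lorentz = fun v => (Real.sqrt (1 - v ^ 2))⁻¹ from funext fun v => one_div _]
  refine (hsqrt.fun_inv (Real.sqrt_pos.mpr h).ne').congr_deriv ?_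
  field_simp
  norm_num

theorem symplectic_pairing_tangent_vectors (u : ℝ) (hu : u ∈ Set.Ioo (-1:ℝ) 1) (ξ : ℝ) :
    (∫ x : ℝ,
        (-(deriv (fun ξ' => psi0 ξ' u x) ξ) * (deriv (fun u' => theta0 ξ u' x) u)
          + (deriv (fun ξ' => theta0 ξ' u x) ξ) * (deriv (fun u' => psi0 ξ u' x) u)))
      = (lorentz u) ^ 3 * ∫ Z : ℝ, (deriv thetaK Z) ^ 2 := by
  have hγ := lorentz_pos hu
  have hγ' := hasDerivAt_lorentz hu
  have hprefactor : lorentz u * (lorentz u + u * deriv lorentz u) = lorentz u ^ 4 := by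
    rw [hγ'.deriv]
    linear_combination -lorentz u ^ 2 * lorentz_sq_mul_one_sub_sq hu
  have hdensity (x : ℝ) :
      -(deriv (fun ξ' => psi0 ξ' u x) ξ) * (deriv (fun u' => theta0 ξ u' x) u)
          + (deriv (fun ξ' => theta0 ξ' u x) ξ) * (deriv (fun u' => psi0 ξ u' x) u)
        = lorentz u ^ 4 * deriv thetaK (lorentz u * (x - ξ)) ^ 2 := by
    rw [← hprefactor]
    exact travelingWave_symplectic_density contDiff_thetaK hγ'.differentiableAt ξ x
  simp_rw [hdensity]
  rw [integral_const_mul, integral_comp_mul_sub_real (fun Z => deriv thetaK Z ^ 2),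
    abs_inv, abs_of_pos hγ, smul_eq_mul]
  field_simp
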